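/- In the sedenions, no element of the 8-ball subalgebra spanned by {1, i_1, i_8, i_9} is a zero divisor: for any nonzero x in the real span of {1, i_1, i_8, i_9} and any nonzero sedenion y in the same span, x·y ≠ 0. -/

import Mathlib

/-- The Cayley-Dickson tower of algebras over ℝ: `CD n` has dimension `2^n`. -/
def CD : ℕ → Type
  | 0 => ℝ
  | n+1 => CD n × CD n

noncomputable instance instCDAddCommGroup : (n : ℕ) → AddCommGroup (CD n)
  | 0 => inferInstanceAs (AddCommGroup ℝ)
  | n+1 => @Prod.instAddCommGroup _ _ (instCDAddCommGroup n) (instCDAddCommGroup n)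

/-- Cayley-Dickson conjugation. -/
noncomputable def CD.conj : {n : ℕ} → CD n → CD n
  | 0, x => x
  | _+1, (a, b) => (CD.conj a, -b)

/-- Cayley-Dickson multiplication: `(a,b)(c,d) = (ac − d* b, da + b c*)`. -/
noncomputable def CD.mul : {n : ℕ} → CD n → CD n → CD n
  | 0, x, y => (show ℝ from x) * (show ℝ from y)
  | _+1, (a, b), (c, d) =>
      (CD.mul a c - CD.mul (CD.conj d) b, CD.mul d a + CD.mul b (CD.conj c))

/-- The standard basis unit `i_k` of `CD n`, for `k < 2^n`. -/
noncomputable def CD.e : (n : ℕ) → ℕ → CD n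
  | 0, _ => (1 : ℝ)
  | n+1, k => if k < 2^n then (CD.e n k, 0) else (0, CD.e n (k - 2^n))


noncomputable instance instCDModule : (n : ℕ) → Module ℝ (CD n)
  | 0 => inferInstanceAs (Module ℝ ℝ)
  | n+1 =>
      letI := instCDModule n
      inferInstanceAs (Module ℝ (CD n × CD n))

/-!
The span of `i_0, i_1, i_8, i_9` is the image of `CD 2 ≅ ℍ` under the doubling of the embedding
`CD 1 → CD 3`, `x ↦ ((x, 0), 0)`. An additive map respecting Cayley–Dickson multiplication and
conjugation still does after doubling, so the 8-ball is a multiplicatively embedded copy of the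
quaternions, which have no zero divisors.
-/
open Quaternion

namespace CD

def mk {n : ℕ} (a b : CD n) : CD (n + 1) := (a, b)

theorem mk_inj {n : ℕ} {a b c d : CD n} : mk a b = mk c d ↔ a = c ∧ b = d := Prod.ext_iff

theorem mk_zero_zero {n : ℕ} : mk (0 : CD n) 0 = 0 := rfl

theorem mk_add_mk {n : ℕ} (a b c d : CD n) : mk a b + mk c d = mk (a + c) (b + d) := rfl

theorem mk_sub_mk {n : ℕ} (a b c d : CD n) : mk a b - mk c d = mk (a - c) (b - d) := rfl

theorem conj_mk {n : ℕ} (a b : CD n) : conj (mk a b) = mk (conj a) (-b) := rfl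

theorem mul_mk {n : ℕ} (a b c d : CD n) :
    mul (mk a b) (mk c d) = mk (mul a c - mul (conj d) b) (mul d a + mul b (conj c)) := rfl

theorem conj_zero : ∀ {n : ℕ}, conj (0 : CD n) = 0
  | 0 => rfl
  | _ + 1 => by rw [← mk_zero_zero, conj_mk, conj_zero, neg_zero]

mutual
theorem mul_zero : ∀ {n : ℕ} (x : CD n), mul x 0 = 0
  | 0, x => MulZeroClass.mul_zero (show ℝ from x)
  | _ + 1, (a, b) => show mul (mk a b) (mk 0 0) = mk 0 0 by
    rw [mul_mk, conj_zero, mul_zero, zero_mul, zero_mul, mul_zero, sub_zero, add_zero]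

theorem zero_mul : ∀ {n : ℕ} (x : CD n), mul 0 x = 0
  | 0, x => MulZeroClass.zero_mul (show ℝ from x)
  | _ + 1, (c, d) => show mul (mk 0 0) (mk c d) = mk 0 0 by
    rw [mul_mk, zero_mul, mul_zero, mul_zero, zero_mul, sub_zero, add_zero]
end

/-- `CD 0` is `ℝ` only after unfolding `CD`; casting reals through `ofReal` keeps level-0 terms
syntactically of type `CD 0`, without which `simp` cannot rewrite with the `mk` lemmas. -/
def ofReal (x : ℝ) : CD 0 := x

theorem ofReal_inj {x y : ℝ} : ofReal x = ofReal y ↔ x = y := Iff.rfl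

theorem ofReal_add (x y : ℝ) : ofReal x + ofReal y = ofReal (x + y) := rfl

theorem ofReal_sub (x y : ℝ) : ofReal x - ofReal y = ofReal (x - y) := rfl

theorem ofReal_neg (x : ℝ) : -ofReal x = ofReal (-x) := rfl

theorem conj_ofReal (x : ℝ) : conj (ofReal x) = ofReal x := rfl

theorem mul_ofReal (x y : ℝ) : mul (ofReal x) (ofReal y) = ofReal (x * y) := rfl

structure PreservesMulConj {m n : ℕ} (f : CD m →ₗ[ℝ] CD n) : Prop where
  map_mul : ∀ x y, f (mul x y) = mul (f x) (f y)
  map_conj : ∀ x, f (conj x) = conj (f x)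

theorem PreservesMulConj.comp {l m n : ℕ} {g : CD m →ₗ[ℝ] CD n} {f : CD l →ₗ[ℝ] CD m}
    (hg : PreservesMulConj g) (hf : PreservesMulConj f) : PreservesMulConj (g.comp f) where
  map_mul x y := by simp only [LinearMap.comp_apply, hf.map_mul, hg.map_mul]
  map_conj x := by simp only [LinearMap.comp_apply, hf.map_conj, hg.map_conj]

noncomputable def embed (n : ℕ) : CD n →ₗ[ℝ] CD (n + 1) := LinearMap.inl ℝ _ _

theorem embed_apply {n : ℕ} (x : CD n) : embed n x = mk x 0 := rfl

theorem embed_injective (n : ℕ) : Function.Injective (embed n) := LinearMap.inl_injective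

theorem preservesMulConj_embed (n : ℕ) : PreservesMulConj (embed n) where
  map_mul x y := by
    simp only [embed_apply, mul_mk, conj_zero, mul_zero, zero_mul, sub_zero, add_zero]
  map_conj x := by rw [embed_apply, embed_apply, conj_mk, neg_zero]

noncomputable def double {m n : ℕ} (f : CD m →ₗ[ℝ] CD n) :
    CD (m + 1) →ₗ[ℝ] CD (n + 1) :=
  f.prodMap f

theorem double_mk {m n : ℕ} (f : CD m →ₗ[ℝ] CD n) (a b : CD m) :
    double f (mk a b) = mk (f a) (f b) :=
  rfl

theorem double_injective {m n : ℕ} {f : CD m →ₗ[ℝ] CD n} (hf : Function.Injective f) :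
    Function.Injective (double f) :=
  Prod.map_injective.2 ⟨hf, hf⟩

theorem PreservesMulConj.double {m n : ℕ} {f : CD m →ₗ[ℝ] CD n} (hf : PreservesMulConj f) :
    PreservesMulConj (double f) where
  map_mul := by
    rintro ⟨a, b⟩ ⟨c, d⟩
    show CD.double f (mul (CD.mk a b) (CD.mk c d)) =
      mul (CD.double f (CD.mk a b)) (CD.double f (CD.mk c d))
    simp only [mul_mk, double_mk, map_sub, map_add, hf.map_mul, hf.map_conj]
  map_conj := by
    rintro ⟨a, b⟩
    show CD.double f (conj (CD.mk a b)) = conj (CD.double f (CD.mk a b))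
    simp only [conj_mk, double_mk, map_neg, hf.map_conj]

noncomputable def ofQuaternion : ℍ[ℝ] →ₗ[ℝ] CD 2 where
  toFun q := mk (mk (ofReal q.re) (ofReal q.imI)) (mk (ofReal q.imJ) (ofReal q.imK))
  map_add' _ _ := rfl
  map_smul' _ _ := rfl

theorem ofQuaternion_apply (q : ℍ[ℝ]) :
    ofQuaternion q = mk (mk (ofReal q.re) (ofReal q.imI)) (mk (ofReal q.imJ) (ofReal q.imK)) :=
  rfl

theorem ofQuaternion_injective : Function.Injective ofQuaternion := by
  intro p q h
  simp only [ofQuaternion_apply, mk_inj, ofReal_inj] at h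
  obtain ⟨⟨h₁, h₂⟩, h₃, h₄⟩ := h
  exact Quaternion.ext _ _ h₁ h₂ h₃ h₄

theorem ofQuaternion_mul (p q : ℍ[ℝ]) :
    ofQuaternion (p * q) = mul (ofQuaternion p) (ofQuaternion q) := by
  simp only [ofQuaternion_apply, mul_mk, conj_mk, mk_sub_mk, mk_add_mk, mul_ofReal, conj_ofReal,
    ofReal_sub, ofReal_add, ofReal_neg, mk_inj, ofReal_inj]
  refine ⟨⟨?_, ?_⟩, ?_, ?_⟩ <;> simp only [re_mul, imI_mul, imJ_mul, imK_mul] <;> ring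

noncomputable def eightBall : ℍ[ℝ] →ₗ[ℝ] CD 4 :=
  (double ((embed 2).comp (embed 1))).comp ofQuaternion

theorem eightBall_mul (p q : ℍ[ℝ]) : eightBall (p * q) = mul (eightBall p) (eightBall q) := by
  have hdouble := ((preservesMulConj_embed 2).comp (preservesMulConj_embed 1)).double
  rw [eightBall, LinearMap.comp_apply, ofQuaternion_mul]
  exact hdouble.map_mul _ _

theorem eightBall_injective : Function.Injective eightBall := by
  have hembed : Function.Injective ((embed 2).comp (embed 1)) :=
    (embed_injective 2).comp (embed_injective 1)
  exact (double_injective hembed).comp ofQuaternion_injective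

theorem span_le_range_eightBall :
    Submodule.span ℝ {e 4 0, e 4 1, e 4 8, e 4 9} ≤ LinearMap.range eightBall := by
  rw [Submodule.span_le]
  rintro _ (rfl | rfl | rfl | rfl)
  exacts [⟨⟨1, 0, 0, 0⟩, rfl⟩, ⟨⟨0, 1, 0, 0⟩, rfl⟩, ⟨⟨0, 0, 1, 0⟩, rfl⟩,
    ⟨⟨0, 0, 0, 1⟩, rfl⟩]

end CD

/-- No element of the 8-ball subalgebra spanned by `{1, i_1, i_8, i_9}` is a zero divisor
within that subalgebra. -/
theorem eight_ball_no_zero_divisors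
    (x y : CD 4)
    (hx : x ∈ Submodule.span ℝ ({CD.e 4 0, CD.e 4 1, CD.e 4 8, CD.e 4 9} : Set (CD 4)))
    (hy : y ∈ Submodule.span ℝ ({CD.e 4 0, CD.e 4 1, CD.e 4 8, CD.e 4 9} : Set (CD 4)))
    (hx0 : x ≠ 0) (hy0 : y ≠ 0) :
    CD.mul x y ≠ 0 := by
  obtain ⟨p, rfl⟩ := CD.span_le_range_eightBall hx
  obtain ⟨q, rfl⟩ := CD.span_le_range_eightBall hy
  rw [map_ne_zero_iff _ CD.eightBall_injective] at hx0 hy0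
  rw [← CD.eightBall_mul, map_ne_zero_iff _ CD.eightBall_injective]
  exact mul_ne_zero hx0 hy0
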